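/- arXiv:1604.01432 — 8 statements merged into one kernel-verified Lean document; each statement's English description precedes it below -/
import Mathlib

section
/- If f : ℝⁿ → ℝ is a convex nonnegative function with f(0) = 0, then ∫_{ℝⁿ} e^{-f(w)} dw ≤ C_n · |{w : f(w) ≤ 1}|, where C_n = 1 + Σ_{j=1}^∞ e^{-j}(j+1)ⁿ. -/
/-!
Convexity and `f 0 = 0` give `f (x / t) ≤ f x / t` for `t ≥ 1`, so the sublevel set `{f ≤ t}` sits
inside `t • {f ≤ 1}` and has volume at most `tⁿ |{f ≤ 1}|`. Bounding `e^{-f}` by `1` on `{f ≤ 1}`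
and by `e^{-(j+1)}` on each shell `{j + 1 < f ≤ j + 2}` then gives the constant.
-/

open MeasureTheory Pointwise
open scoped ENNReal

theorem ConvexOn.map_smul_le {E : Type*} [AddCommGroup E] [Module ℝ E] {f : E → ℝ}
    (hf : ConvexOn ℝ Set.univ f) (hf0 : f 0 ≤ 0) {a : ℝ} (ha₀ : 0 ≤ a) (ha₁ : a ≤ 1) (x : E) :
    f (a • x) ≤ a * f x := by
  have h := hf.2 (Set.mem_univ x) (Set.mem_univ 0) ha₀ (sub_nonneg.2 ha₁) (by ring)
  rw [smul_zero, add_zero, smul_eq_mul, smul_eq_mul] at h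
  nlinarith

theorem ConvexOn.setOf_le_mul_subset_smul {E : Type*} [AddCommGroup E] [Module ℝ E] {f : E → ℝ}
    (hf : ConvexOn ℝ Set.univ f) (hf0 : f 0 ≤ 0) {t : ℝ} (ht : 1 ≤ t) (c : ℝ) :
    {x | f x ≤ t * c} ⊆ t • {x | f x ≤ c} := by
  intro x hx
  have ht₀ : 0 < t := one_pos.trans_le ht
  refine ⟨t⁻¹ • x, ?_, smul_inv_smul₀ ht₀.ne' x⟩
  calc f (t⁻¹ • x) ≤ t⁻¹ * f x := hf.map_smul_le hf0 (by positivity) (inv_le_one_of_one_le₀ ht) x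
    _ ≤ t⁻¹ * (t * c) := by gcongr; exact hx
    _ = c := by field_simp

theorem ConvexOn.measure_setOf_le_le {E : Type*} [NormedAddCommGroup E] [NormedSpace ℝ E]
    [FiniteDimensional ℝ E] [MeasurableSpace E] [BorelSpace E] (μ : Measure E) [μ.IsAddHaarMeasure]
    {f : E → ℝ} (hf : ConvexOn ℝ Set.univ f) (hf0 : f 0 ≤ 0) {t : ℝ} (ht : 1 ≤ t) :
    μ {x | f x ≤ t} ≤ ENNReal.ofReal (t ^ Module.finrank ℝ E) * μ {x | f x ≤ 1} := by
  calc μ {x | f x ≤ t} ≤ μ (t • {x | f x ≤ 1}) := by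
        simpa using measure_mono (μ := μ) (hf.setOf_le_mul_subset_smul hf0 ht 1)
    _ = ENNReal.ofReal (t ^ Module.finrank ℝ E) * μ {x | f x ≤ 1} := by
        rw [Measure.addHaar_smul, abs_of_nonneg (by positivity)]

theorem ofReal_exp_neg_le_indicator_add_tsum {g : ℝ} (hg : 0 ≤ g) :
    ENNReal.ofReal (Real.exp (-g)) ≤ Set.indicator (Set.Iic 1) 1 g
      + ∑' j : ℕ, ENNReal.ofReal (Real.exp (-((j : ℝ) + 1))) *
          Set.indicator (Set.Iic ((j : ℝ) + 2)) 1 g := by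
  rcases le_total g 1 with hg1 | hg1
  · refine le_add_right ?_
    rw [Set.indicator_of_mem (Set.mem_Iic.2 hg1)]
    exact ENNReal.ofReal_le_one.2 (Real.exp_le_one_iff.2 (neg_nonpos.2 hg))
  · refine le_add_left ?_
    have hfloor : 1 ≤ ⌊g⌋₊ := Nat.one_le_floor_iff _ |>.2 hg1
    refine le_trans ?_ (ENNReal.le_tsum (⌊g⌋₊ - 1))
    have hcast : ((⌊g⌋₊ - 1 : ℕ) : ℝ) + 1 = ⌊g⌋₊ := by
      rw [Nat.cast_sub hfloor]; ring
    rw [Set.indicator_of_mem (Set.mem_Iic.2 (by linarith [Nat.lt_floor_add_one g])),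
      Pi.one_apply, mul_one, hcast]
    exact ENNReal.ofReal_le_ofReal (Real.exp_le_exp.2 (neg_le_neg (Nat.floor_le hg)))

theorem lintegral_ofReal_exp_neg_le {α : Type*} [MeasurableSpace α] (μ : Measure α)
    {g : α → ℝ} (hg : Measurable g) (hg₀ : ∀ x, 0 ≤ g x) :
    ∫⁻ x, ENNReal.ofReal (Real.exp (-g x)) ∂μ ≤ μ {x | g x ≤ 1}
      + ∑' j : ℕ, ENNReal.ofReal (Real.exp (-((j : ℝ) + 1))) * μ {x | g x ≤ (j : ℝ) + 2} := by
  have hind_meas : ∀ c : ℝ, Measurable fun x => Set.indicator (Set.Iic c) (1 : ℝ → ℝ≥0∞) (g x) :=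
    fun c => (measurable_one.indicator measurableSet_Iic).comp hg
  have hind : ∀ c : ℝ, ∫⁻ x, Set.indicator (Set.Iic c) 1 (g x) ∂μ = μ {x | g x ≤ c} := fun c =>
    lintegral_indicator_one (measurableSet_le hg measurable_const)
  calc ∫⁻ x, ENNReal.ofReal (Real.exp (-g x)) ∂μ
      ≤ ∫⁻ x, (Set.indicator (Set.Iic 1) 1 (g x) + ∑' j : ℕ,
          ENNReal.ofReal (Real.exp (-((j : ℝ) + 1))) *
            Set.indicator (Set.Iic ((j : ℝ) + 2)) 1 (g x)) ∂μ :=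
        lintegral_mono fun x => ofReal_exp_neg_le_indicator_add_tsum (hg₀ x)
    _ = _ := by
        rw [lintegral_add_left (hind_meas 1),
          lintegral_tsum fun j => ((hind_meas _).const_mul _).aemeasurable]
        simp only [lintegral_const_mul' _ _ ENNReal.ofReal_ne_top, hind]

theorem summable_exp_neg_mul_pow (n : ℕ) :
    Summable fun j : ℕ => Real.exp (-((j : ℝ) + 1)) * ((j : ℝ) + 2) ^ n := by
  have h := (summable_nat_add_iff 2).2 (Real.summable_pow_mul_exp_neg_nat_mul n one_pos)
  refine (h.mul_left (Real.exp 1)).congr fun j => ?_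
  rw [mul_left_comm, ← Real.exp_add]
  push_cast
  ring_nf

theorem stmt2 (n : ℕ) (f : (Fin n → ℝ) → ℝ)
    (hconv : ConvexOn ℝ Set.univ f) (hf0 : f 0 = 0) (hnn : ∀ w, 0 ≤ f w) :
    ∫⁻ w, ENNReal.ofReal (Real.exp (-(f w)))
      ≤ ENNReal.ofReal (1 + ∑' j : ℕ, Real.exp (-((j : ℝ) + 1)) * ((j : ℝ) + 2) ^ n)
          * volume {w : Fin n → ℝ | f w ≤ 1} := by
  have hmeas : Measurable f :=
    (continuousOn_univ.1 (hconv.continuousOn isOpen_univ)).measurable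
  have hterm : ∀ j : ℕ, 0 ≤ Real.exp (-((j : ℝ) + 1)) * ((j : ℝ) + 2) ^ n := fun j => by positivity
  calc ∫⁻ w, ENNReal.ofReal (Real.exp (-(f w)))
      ≤ volume {w | f w ≤ 1} + ∑' j : ℕ, ENNReal.ofReal (Real.exp (-((j : ℝ) + 1))) *
          volume {w | f w ≤ (j : ℝ) + 2} := lintegral_ofReal_exp_neg_le volume hmeas hnn
    _ ≤ volume {w | f w ≤ 1} + ∑' j : ℕ, ENNReal.ofReal (Real.exp (-((j : ℝ) + 1))) *
          (ENNReal.ofReal (((j : ℝ) + 2) ^ n) * volume {w | f w ≤ 1}) := by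
        gcongr with j
        simpa using hconv.measure_setOf_le_le volume hf0.le (t := (j : ℝ) + 2) (by linarith)
    _ = _ := by
        simp_rw [← mul_assoc, ← ENNReal.ofReal_mul (Real.exp_pos _).le, ENNReal.tsum_mul_right,
          ← ENNReal.ofReal_tsum_of_nonneg hterm (summable_exp_neg_mul_pow n),
          ENNReal.ofReal_add zero_le_one (tsum_nonneg hterm), ENNReal.ofReal_one, add_mul, one_mul]
end

section
/- Let f : ℝⁿ → ℝ be convex with f(0) = 0 and suppose f is not identically zero on any ray, i.e., the sublevel set {v : f(v) ≤ 1} is bounded. Then ∫_{ℝⁿ} e^{-f(w)} dw is finite and comparable to |{w : f(w) ≤ 1}| with constants depending only on n. -/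
/-! The lower bound holds because `e^{-f} ≥ e^{-1}` on `{f ≤ 1}`. For the upper bound, convexity
and `f 0 = 0` give `{f ≤ s} ⊆ s • {f ≤ 1}` for `s ≥ 1`, so `|{f ≤ k + 1}| ≤ (k + 1)^n |{f ≤ 1}|`.
Bounding `e^{-f}` by `e^{-k}` where `⌊f⌋ = k` gives
`∫ e^{-f} ≤ (∑ₖ (k + 1)^n e^{-k}) |{f ≤ 1}|`, and the series converges. -/

open MeasureTheory Set Pointwise

theorem ConvexOn.sublevel_subset_smul {E : Type*} [AddCommGroup E] [Module ℝ E] {f : E → ℝ}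
    (hf : ConvexOn ℝ univ f) (hf0 : f 0 = 0) {s : ℝ} (hs : 1 ≤ s) :
    {x | f x ≤ s} ⊆ s • {x | f x ≤ 1} := by
  have hs0 : 0 < s := one_pos.trans_le hs
  intro x hx
  rw [mem_smul_set_iff_inv_smul_mem₀ hs0.ne']
  calc f (s⁻¹ • x) = f (s⁻¹ • x + (1 - s⁻¹) • 0) := by rw [smul_zero, add_zero]
    _ ≤ s⁻¹ * f x + (1 - s⁻¹) * f 0 :=
      hf.2 trivial trivial (by positivity) (sub_nonneg.2 (inv_le_one_of_one_le₀ hs)) (by ring)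
    _ ≤ s⁻¹ * s := by rw [hf0, mul_zero, add_zero]; gcongr; exact hx
    _ = 1 := inv_mul_cancel₀ hs0.ne'

theorem ofReal_exp_neg_one_mul_measure_le_lintegral {α : Type*} [MeasurableSpace α]
    (μ : Measure α) {g : α → ℝ} (hg : Measurable g) :
    ENNReal.ofReal (Real.exp (-1)) * μ {x | g x ≤ 1}
      ≤ ∫⁻ x, ENNReal.ofReal (Real.exp (-g x)) ∂μ := by
  calc ENNReal.ofReal (Real.exp (-1)) * μ {x | g x ≤ 1}
      = ∫⁻ _ in {x | g x ≤ 1}, ENNReal.ofReal (Real.exp (-1)) ∂μ :=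
        (setLIntegral_const _ _).symm
    _ ≤ ∫⁻ x in {x | g x ≤ 1}, ENNReal.ofReal (Real.exp (-g x)) ∂μ :=
      setLIntegral_mono' (hg measurableSet_Iic) fun x hx =>
        ENNReal.ofReal_le_ofReal (Real.exp_le_exp.2 (neg_le_neg hx))
    _ ≤ ∫⁻ x, ENNReal.ofReal (Real.exp (-g x)) ∂μ := setLIntegral_le_lintegral _ _

theorem lintegral_exp_neg_le_tsum {α : Type*} [MeasurableSpace α] (μ : Measure α) {g : α → ℝ}
    (hg : Measurable g) (hg0 : ∀ x, 0 ≤ g x) :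
    ∫⁻ x, ENNReal.ofReal (Real.exp (-g x)) ∂μ
      ≤ ∑' k : ℕ, ENNReal.ofReal (Real.exp (-k)) * μ {x | g x ≤ k + 1} := by
  have hm (k : ℕ) : MeasurableSet {x | g x ≤ k + 1} := hg measurableSet_Iic
  have hpt (x : α) : ENNReal.ofReal (Real.exp (-g x))
      ≤ ∑' k : ℕ, {y | g y ≤ k + 1}.indicator (fun _ => ENNReal.ofReal (Real.exp (-k))) x := by
    refine le_trans ?_ (ENNReal.le_tsum ⌊g x⌋₊)
    rw [indicator_of_mem (show x ∈ {y | g y ≤ ⌊g x⌋₊ + 1} from (Nat.lt_floor_add_one (g x)).le)]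
    exact ENNReal.ofReal_le_ofReal (Real.exp_le_exp.2 (neg_le_neg (Nat.floor_le (hg0 x))))
  calc ∫⁻ x, ENNReal.ofReal (Real.exp (-g x)) ∂μ
      ≤ ∫⁻ x, ∑' k : ℕ,
          {y | g y ≤ k + 1}.indicator (fun _ => ENNReal.ofReal (Real.exp (-k))) x ∂μ :=
        lintegral_mono hpt
    _ = ∑' k : ℕ, ENNReal.ofReal (Real.exp (-k)) * μ {x | g x ≤ k + 1} := by
      rw [lintegral_tsum fun k => (measurable_const.indicator (hm k)).aemeasurable]
      simp only [lintegral_indicator_const (hm _)]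

noncomputable def polyExpSum (d : ℕ) : ℝ := ∑' k : ℕ, ((k : ℝ) + 1) ^ d * Real.exp (-k)

theorem summable_polyExpSum (d : ℕ) :
    Summable fun k : ℕ => ((k : ℝ) + 1) ^ d * Real.exp (-k) := by
  have h := (summable_nat_add_iff 1).2 (Real.summable_pow_mul_exp_neg_nat_mul d one_pos)
  refine (h.mul_left (Real.exp 1)).congr fun k => ?_
  push_cast
  rw [mul_left_comm, ← Real.exp_add]
  ring_nf

theorem polyExpSum_pos (d : ℕ) : 0 < polyExpSum d :=
  (summable_polyExpSum d).tsum_pos (fun _ => by positivity) 0 (by simp)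

section AddHaar

variable {E : Type*} [NormedAddCommGroup E] [NormedSpace ℝ E] [MeasurableSpace E] [BorelSpace E]
  [FiniteDimensional ℝ E] (μ : Measure E) [μ.IsAddHaarMeasure]

theorem ConvexOn.addHaar_sublevel_le {f : E → ℝ} (hf : ConvexOn ℝ univ f) (hf0 : f 0 = 0)
    {s : ℝ} (hs : 1 ≤ s) :
    μ {x | f x ≤ s} ≤ ENNReal.ofReal (s ^ Module.finrank ℝ E) * μ {x | f x ≤ 1} :=
  (measure_mono (hf.sublevel_subset_smul hf0 hs)).trans_eq
    (Measure.addHaar_smul_of_nonneg μ (zero_le_one.trans hs) _)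

theorem ConvexOn.lintegral_exp_neg_le {f : E → ℝ} (hf : ConvexOn ℝ univ f) (hf0 : f 0 = 0)
    (hf_nonneg : ∀ x, 0 ≤ f x) :
    ∫⁻ x, ENNReal.ofReal (Real.exp (-f x)) ∂μ
      ≤ ENNReal.ofReal (polyExpSum (Module.finrank ℝ E)) * μ {x | f x ≤ 1} := by
  set d := Module.finrank ℝ E
  have hshell (k : ℕ) : ENNReal.ofReal (Real.exp (-k)) * μ {x | f x ≤ k + 1}
      ≤ ENNReal.ofReal (((k : ℝ) + 1) ^ d * Real.exp (-k)) * μ {x | f x ≤ 1} := by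
    calc ENNReal.ofReal (Real.exp (-k)) * μ {x | f x ≤ k + 1}
        ≤ ENNReal.ofReal (Real.exp (-k))
            * (ENNReal.ofReal (((k : ℝ) + 1) ^ d) * μ {x | f x ≤ 1}) := by
          gcongr; exact hf.addHaar_sublevel_le μ hf0 (by simp)
      _ = ENNReal.ofReal (((k : ℝ) + 1) ^ d * Real.exp (-k)) * μ {x | f x ≤ 1} := by
          rw [← mul_assoc, ← ENNReal.ofReal_mul (Real.exp_pos _).le, mul_comm (Real.exp _)]
  calc ∫⁻ x, ENNReal.ofReal (Real.exp (-f x)) ∂μ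
      ≤ ∑' k : ℕ, ENNReal.ofReal (Real.exp (-k)) * μ {x | f x ≤ k + 1} :=
        lintegral_exp_neg_le_tsum μ hf.locallyLipschitz.continuous.measurable hf_nonneg
    _ ≤ ∑' k : ℕ, ENNReal.ofReal (((k : ℝ) + 1) ^ d * Real.exp (-k)) * μ {x | f x ≤ 1} :=
        ENNReal.tsum_le_tsum hshell
    _ = ENNReal.ofReal (polyExpSum d) * μ {x | f x ≤ 1} := by
        rw [ENNReal.tsum_mul_right, polyExpSum,
          ENNReal.ofReal_tsum_of_nonneg (fun _ => by positivity) (summable_polyExpSum d)]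

end AddHaar

theorem stmt3 (n : ℕ) :
    ∃ c C : ℝ, 0 < c ∧ 0 < C ∧
      ∀ f : (Fin n → ℝ) → ℝ, ConvexOn ℝ Set.univ f → f 0 = 0 → (∀ w, 0 ≤ f w) →
        Bornology.IsBounded {v : Fin n → ℝ | f v ≤ 1} →
        (∫⁻ w, ENNReal.ofReal (Real.exp (-(f w)))) < ⊤ ∧
        ENNReal.ofReal c * volume {w : Fin n → ℝ | f w ≤ 1}
          ≤ ∫⁻ w, ENNReal.ofReal (Real.exp (-(f w))) ∧
        (∫⁻ w, ENNReal.ofReal (Real.exp (-(f w))))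
          ≤ ENNReal.ofReal C * volume {w : Fin n → ℝ | f w ≤ 1} := by
  refine ⟨Real.exp (-1), polyExpSum n, Real.exp_pos _, polyExpSum_pos n, ?_⟩
  intro f hf hf0 hf_nonneg hbdd
  have hupper := hf.lintegral_exp_neg_le volume hf0 hf_nonneg
  rw [Module.finrank_fin_fun] at hupper
  have hlower := ofReal_exp_neg_one_mul_measure_le_lintegral volume
    hf.locallyLipschitz.continuous.measurable
  exact ⟨hupper.trans_lt (ENNReal.mul_lt_top ENNReal.ofReal_lt_top hbdd.measure_lt_top),
    hlower, hupper⟩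
end

section
/- Fix integers M ≥ 2 and n ≥ 1, and a radius a > 0. Let S(M) be the set of convex polynomials g : ℝⁿ → ℝ of the form g(v) = Σ_{α ∈ Γ(M)} c_α v^α, where Γ(M) = {α ∈ ℕⁿ : 2 ≤ |α| ≤ M} (so g has no constant or linear terms). Then there exists a constant C(M, a) > 0 depending only on M, n, and a such that for every g ∈ S(M), Σ_{α ∈ Γ(M)} |c_α| ≤ C(M, a) · ∫_{|σ|=a} g(σ) dσ. -/
/-!
A convex polynomial `g` without constant and linear terms has a critical point, hence its global
minimum `0`, at the origin. If it also vanished on the sphere `|σ| = a`, convexity would force it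
to vanish on every segment `[0, a v / |v|]`, so `g = 0`. Hence `g ↦ ∫_{|σ|=a} g` is strictly
positive on the nonzero polynomials of the closed cone of convex polynomials supported on `Γ(M)`;
here we use that every open cap of the sphere has positive `μH[n-1]`-measure, since projecting it
onto the hyperplane orthogonal to its centre is a 1-Lipschitz map onto a set containing a ball.
(The sphere has finite measure, being covered by finitely many Lipschitz graphs over such
hyperplanes.) On the compact set of coefficient vectors of `ℓ¹`-norm one in this cone the
functional attains a positive minimum, whose inverse is the constant.
-/

open MeasureTheory Metric Set Module
open scoped RealInnerProductSpace

theorem ConvexOn.isMinOn_of_hasDerivAt_zero {f : ℝ → ℝ} {x : ℝ} (hf : ConvexOn ℝ univ f)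
    (hd : HasDerivAt f 0 x) : IsMinOn f univ x :=
  hf.isMinOn_of_rightDeriv_eq_zero (by simp)
    (hd.hasDerivWithinAt.derivWithin (uniqueDiffWithinAt_Ioi x))

theorem exists_norm_le_mul_of_pos_on_cone {E : Type*} [NormedAddCommGroup E] [NormedSpace ℝ E]
    [FiniteDimensional ℝ E] {K : Set E} (hK : IsClosed K)
    (hsmul : ∀ x ∈ K, ∀ t : ℝ, 0 < t → t • x ∈ K) (f : E →ₗ[ℝ] ℝ)
    (hf : ∀ x ∈ K, x ≠ 0 → 0 < f x) : ∃ C > 0, ∀ x ∈ K, ‖x‖ ≤ C * f x := by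
  obtain ⟨m, hm, hmin⟩ : ∃ m > 0, ∀ y ∈ K ∩ sphere 0 1, m ≤ f y := by
    rcases (K ∩ sphere (0 : E) 1).eq_empty_or_nonempty with h | h
    · exact ⟨1, one_pos, by simp [h]⟩
    obtain ⟨y₀, hy₀, hmin⟩ := ((isCompact_sphere 0 1).inter_left hK).exists_isMinOn h
      (LinearMap.continuous_of_finiteDimensional f).continuousOn
    exact ⟨f y₀, hf y₀ hy₀.1 (ne_zero_of_mem_unit_sphere ⟨y₀, hy₀.2⟩), fun y hy => hmin hy⟩
  refine ⟨m⁻¹, inv_pos.2 hm, fun x hx => ?_⟩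
  rcases eq_or_ne x 0 with rfl | hx0
  · simp
  have hxpos : 0 < ‖x‖ := norm_pos_iff.2 hx0
  have hfx := hmin (‖x‖⁻¹ • x) ⟨hsmul x hx _ (inv_pos.2 hxpos), by simp [norm_smul, hx0]⟩
  rw [map_smul, smul_eq_mul, le_inv_mul_iff₀ hxpos] at hfx
  rwa [le_inv_mul_iff₀ hm, mul_comm]

namespace MvPolynomial

variable {σ R : Type*} [CommRing R]

noncomputable def lineRestrict (g : MvPolynomial σ R) (v : σ → R) :
    Polynomial R :=
  aeval (fun i => Polynomial.C (v i) * Polynomial.X) g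

theorem eval_lineRestrict (g : MvPolynomial σ R) (v : σ → R) (t : R) :
    (lineRestrict g v).eval t = eval (t • v) g := by
  induction g using MvPolynomial.induction_on with
  | C r => simp [lineRestrict]
  | add p q hp hq => simp_all [lineRestrict]
  | mul_X p i hp =>
    simp only [lineRestrict] at hp
    simp only [lineRestrict, map_mul, aeval_X, Polynomial.eval_mul, hp, Polynomial.eval_C,
      Polynomial.eval_X, eval_X, Pi.smul_apply, smul_eq_mul]
    ring

theorem X_sq_dvd_lineRestrict {g : MvPolynomial σ R}
    (hg : ∀ α ∈ g.support, 2 ≤ α.degree) (v : σ → R) :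
    Polynomial.X ^ 2 ∣ lineRestrict g v := by
  rw [lineRestrict, g.as_sum, map_sum]
  refine Finset.dvd_sum fun α hα => ?_
  rw [aeval_monomial, Finsupp.prod]
  simp_rw [mul_pow, Finset.prod_mul_distrib, Finset.prod_pow_eq_pow_sum, ← Finsupp.degree_apply]
  exact ((pow_dvd_pow Polynomial.X (hg α hα)).mul_left _).mul_left _

variable {g : MvPolynomial σ ℝ}

theorem convexOn_eval_lineRestrict (hconv : ConvexOn ℝ univ fun v => eval v g) (v : σ → ℝ) :
    ConvexOn ℝ univ fun t => (lineRestrict g v).eval t := by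
  simp_rw [eval_lineRestrict]
  exact hconv.comp_linearMap (LinearMap.toSpanSingleton ℝ _ v)

theorem eval_lineRestrict_zero (hg : ∀ α ∈ g.support, 2 ≤ α.degree) (v : σ → ℝ) :
    (lineRestrict g v).eval 0 = 0 := by
  obtain ⟨r, hr⟩ := X_sq_dvd_lineRestrict hg v
  simp [hr]

theorem eval_nonneg_of_convexOn (hg : ∀ α ∈ g.support, 2 ≤ α.degree)
    (hconv : ConvexOn ℝ univ fun v => eval v g) (v : σ → ℝ) : 0 ≤ eval v g := by
  obtain ⟨r, hr⟩ := X_sq_dvd_lineRestrict hg v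
  have hderiv : HasDerivAt (fun t => (lineRestrict g v).eval t) 0 0 := by
    simpa [hr] using (lineRestrict g v).hasDerivAt 0
  have hmin := (convexOn_eval_lineRestrict hconv v).isMinOn_of_hasDerivAt_zero hderiv (mem_univ 1)
  simpa [eval_lineRestrict_zero hg, eval_lineRestrict] using hmin

theorem eq_zero_of_convexOn_of_forall_ray (hg : ∀ α ∈ g.support, 2 ≤ α.degree)
    (hconv : ConvexOn ℝ univ fun v => eval v g)
    (hray : ∀ v : σ → ℝ, v ≠ 0 → ∃ t : ℝ, 0 < t ∧ eval (t • v) g = 0) : g = 0 := by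
  refine MvPolynomial.funext fun v => ?_
  rw [map_zero, ← one_smul ℝ v, ← eval_lineRestrict]
  rcases eq_or_ne v 0 with rfl | hv
  · simpa [eval_lineRestrict] using eval_lineRestrict_zero hg (0 : σ → ℝ)
  obtain ⟨t, ht, hvt⟩ := hray v hv
  suffices lineRestrict g v = 0 by simp [this]
  refine Polynomial.eq_zero_of_infinite_isRoot _ ((Icc_infinite ht).mono fun s hs => ?_)
  refine le_antisymm ?_ ((eval_lineRestrict g v s).symm ▸ eval_nonneg_of_convexOn hg hconv _)
  have := (convexOn_eval_lineRestrict hconv v).le_on_segment (mem_univ 0) (mem_univ t)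
    (by rwa [segment_eq_Icc ht.le])
  simpa [eval_lineRestrict_zero hg, eval_lineRestrict, hvt] using this

/-- The `ℓ¹` norm on the coefficient space is the quantity `∑ |c_α|` to be bounded. -/
noncomputable def ofCoeffs (s : Finset (σ →₀ ℕ)) :
    PiLp 1 (fun _ : s => ℝ) →ₗ[ℝ] MvPolynomial σ ℝ :=
  Fintype.linearCombination ℝ (fun α : s => monomial α.1 (1 : ℝ)) ∘ₗ
    (WithLp.linearEquiv 1 ℝ (s → ℝ)).toLinearMap

variable {s : Finset (σ →₀ ℕ)}

theorem coeff_ofCoeffs_of_mem (c : PiLp 1 (fun _ : s => ℝ)) (α : s) :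
    coeff α.1 (ofCoeffs s c) = c α := by
  classical
  simp only [ofCoeffs, LinearMap.coe_comp, Function.comp_apply, Fintype.linearCombination_apply,
    smul_monomial, coeff_sum, coeff_monomial]
  rw [Finset.sum_eq_single α (fun _ _ hβ => if_neg fun h => hβ (Subtype.ext h)) (by simp)]
  simp

theorem coeff_ofCoeffs_of_notMem (c : PiLp 1 (fun _ : s => ℝ)) {β : σ →₀ ℕ} (hβ : β ∉ s) :
    coeff β (ofCoeffs s c) = 0 := by
  classical
  simp only [ofCoeffs, LinearMap.coe_comp, Function.comp_apply, Fintype.linearCombination_apply,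
    smul_monomial, coeff_sum, coeff_monomial]
  exact Finset.sum_eq_zero fun α _ => if_neg fun (h : α.1 = β) => hβ (h ▸ α.2)

theorem support_ofCoeffs_subset (c : PiLp 1 (fun _ : s => ℝ)) : (ofCoeffs s c).support ⊆ s :=
  fun _ hβ => by_contra fun h => mem_support_iff.1 hβ (coeff_ofCoeffs_of_notMem c h)

theorem ofCoeffs_coeff (hg : g.support ⊆ s) :
    ofCoeffs s (WithLp.toLp 1 fun α => coeff α.1 g) = g := by
  ext β
  by_cases hβ : β ∈ s
  · exact coeff_ofCoeffs_of_mem _ ⟨β, hβ⟩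
  · rw [coeff_ofCoeffs_of_notMem _ hβ, notMem_support_iff.1 fun h => hβ (hg h)]

theorem exists_sum_abs_coeff_le_mul (s : Finset (σ →₀ ℕ)) (Λ : MvPolynomial σ ℝ →ₗ[ℝ] ℝ)
    (hΛ : ∀ g : MvPolynomial σ ℝ, g ≠ 0 → g.support ⊆ s →
      ConvexOn ℝ univ (fun v => eval v g) → 0 < Λ g) :
    ∃ C > 0, ∀ g : MvPolynomial σ ℝ, g.support ⊆ s → ConvexOn ℝ univ (fun v => eval v g) →
      ∑ α ∈ g.support, |coeff α g| ≤ C * Λ g := by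
  set K := {c | ConvexOn ℝ univ fun v => eval v (ofCoeffs s c)}
  have hK : IsClosed K := by
    refine IsClosed.preimage (f := fun c v => eval v (ofCoeffs s c)) (continuous_pi fun v => ?_)
      isClosed_setOfPred_convexOn
    exact ((aeval v).toLinearMap ∘ₗ ofCoeffs s).continuous_of_finiteDimensional
  have hcone (c) (hc : c ∈ K) (t : ℝ) (ht : 0 < t) : t • c ∈ K := by
    have hc' : ConvexOn ℝ univ fun v => eval v (ofCoeffs s c) := hc
    simpa [K, smul_eval] using hc'.smul ht.le
  have hpos (c) (hc : c ∈ K) (hc0 : c ≠ 0) : 0 < (Λ ∘ₗ ofCoeffs s) c := by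
    refine hΛ _ (fun h => hc0 ?_) (support_ofCoeffs_subset c) hc
    ext α
    simpa [h] using (coeff_ofCoeffs_of_mem c α).symm
  obtain ⟨C, hC, hbound⟩ := exists_norm_le_mul_of_pos_on_cone hK hcone _ hpos
  refine ⟨C, hC, fun g hgs hconv => ?_⟩
  have hg := hbound (WithLp.toLp 1 fun α => coeff α.1 g) (by simpa [K, ofCoeffs_coeff hgs])
  rw [PiLp.norm_eq_of_L1] at hg
  simp only [LinearMap.coe_comp, Function.comp_apply, ofCoeffs_coeff hgs, Real.norm_eq_abs] at hg
  calc ∑ α ∈ g.support, |coeff α g| = ∑ α ∈ s, |coeff α g| :=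
        Finset.sum_subset hgs fun β _ hβ => by simp [notMem_support_iff.1 hβ]
    _ = ∑ α : s, |coeff α.1 g| := (Finset.sum_coe_sort s _).symm
    _ ≤ C * Λ g := hg

end MvPolynomial

section SphereChart

variable {E : Type*} [NormedAddCommGroup E] [InnerProductSpace ℝ E]

noncomputable def sphereChart (a : ℝ) (u : E) (y : (ℝ ∙ u)ᗮ) : E :=
  y + √(a ^ 2 - ‖y‖ ^ 2) • u

variable {a : ℝ} {u : E}

theorem norm_sphereChart (hu : ‖u‖ = 1) {y : (ℝ ∙ u)ᗮ} (hy : ‖y‖ ≤ a) :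
    ‖sphereChart a u y‖ = a := by
  have hyu : ⟪(y : E), u⟫ = 0 := Submodule.mem_orthogonal_singleton_iff_inner_left.1 y.2
  have hsq : ‖sphereChart a u y‖ ^ 2 = a ^ 2 := by
    rw [sphereChart, norm_add_sq_real, real_inner_smul_right, hyu, norm_smul, hu, mul_one,
      Real.norm_eq_abs, sq_abs, Real.sq_sqrt (by nlinarith [norm_nonneg y])]
    simp
  exact (sq_eq_sq₀ (norm_nonneg _) ((norm_nonneg y).trans hy)).1 hsq

theorem orthogonalProjectionOnto_sphereChart (y : (ℝ ∙ u)ᗮ) :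
    (ℝ ∙ u)ᗮ.orthogonalProjectionOnto (sphereChart a u y) = y := by
  rw [sphereChart, map_add, map_smul, Submodule.orthogonalProjectionOnto_mem_subspace_eq_self,
    Submodule.orthogonalProjectionOnto_eq_zero_iff.2
      (Submodule.le_orthogonal_orthogonal _ (Submodule.mem_span_singleton_self u)),
    smul_zero, add_zero]

theorem mem_image_sphereChart (hu : ‖u‖ = 1) {r : ℝ} {x : E} (hx : ‖x‖ = a)
    (hxu : 0 ≤ ⟪u, x⟫) (hr : a ^ 2 - r ^ 2 ≤ ⟪u, x⟫ ^ 2) (hr0 : 0 ≤ r) :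
    x ∈ sphereChart a u '' closedBall 0 r := by
  have hy : x - ⟪u, x⟫ • u ∈ (ℝ ∙ u)ᗮ := by
    rw [Submodule.mem_orthogonal_singleton_iff_inner_right, inner_sub_right,
      real_inner_smul_right, real_inner_self_eq_norm_sq, hu]
    ring
  have hnorm : ‖x - ⟪u, x⟫ • u‖ ^ 2 = a ^ 2 - ⟪u, x⟫ ^ 2 := by
    rw [norm_sub_sq_real, real_inner_smul_right, real_inner_comm, norm_smul, hu, hx,
      Real.norm_eq_abs]
    ring_nf
    rw [sq_abs]
    ring
  refine ⟨⟨_, hy⟩, ?_, ?_⟩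
  · rw [mem_closedBall_zero_iff, Submodule.coe_norm,
      ← pow_le_pow_iff_left₀ (norm_nonneg _) hr0 two_ne_zero, hnorm]
    linarith
  · rw [sphereChart, Submodule.coe_norm, hnorm, sub_sub_cancel, Real.sqrt_sq hxu]
    simp

theorem norm_inv_smul_of_mem_sphere {x : E} (hx : x ∈ sphere (0 : E) a) (ha : a ≠ 0) :
    ‖a⁻¹ • x‖ = 1 := by
  rw [mem_sphere_zero_iff_norm] at hx
  rw [norm_smul, hx, norm_inv, Real.norm_of_nonneg (hx ▸ norm_nonneg x), inv_mul_cancel₀ ha]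

theorem exists_lipschitzOnWith_sphereChart [FiniteDimensional ℝ E] {r : ℝ} (hr : r < a) :
    ∃ L, LipschitzOnWith L (sphereChart a u) (closedBall 0 r) := by
  refine ContDiffOn.exists_lipschitzOnWith (n := 1) ?_ one_ne_zero (convex_closedBall 0 r)
    (isCompact_closedBall 0 r)
  have hsqrt : ContDiffOn ℝ 1 (fun y : (ℝ ∙ u)ᗮ => √(a ^ 2 - ‖y‖ ^ 2)) (closedBall 0 r) := by
    refine (contDiff_const.sub (contDiff_norm_sq ℝ)).contDiffOn.sqrt fun y hy => ?_
    have hyr := mem_closedBall_zero_iff.1 hy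
    nlinarith [norm_nonneg y]
  exact (ℝ ∙ u)ᗮ.subtypeL.contDiff.contDiffOn.add (hsqrt.smul contDiffOn_const)

end SphereChart

section SphereMeasure

variable {E : Type*} [NormedAddCommGroup E] [InnerProductSpace ℝ E] [FiniteDimensional ℝ E]
  [MeasurableSpace E] [BorelSpace E] {m : ℕ} (hE : finrank ℝ E = m + 1) {a : ℝ}
include hE

theorem isAddHaarMeasure_hausdorffMeasure_orthogonal_span_singleton {u : E} (hu : u ≠ 0) :
    (μH[m] : Measure (ℝ ∙ u)ᗮ).IsAddHaarMeasure := by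
  have : Fact (finrank ℝ E = m + 1) := ⟨hE⟩
  have h := isAddHaarMeasure_hausdorffMeasure (E := (ℝ ∙ u)ᗮ)
  rwa [Submodule.finrank_orthogonal_span_singleton (n := m) hu] at h

theorem hausdorffMeasure_sphere_inter_halfspace_lt_top {u : E} (hu : ‖u‖ = 1) (ha : 0 < a) :
    μH[m] (sphere (0 : E) a ∩ {x | a / 2 < ⟪u, x⟫}) < ⊤ := by
  have := isAddHaarMeasure_hausdorffMeasure_orthogonal_span_singleton hE
    (norm_ne_zero_iff.1 (hu ▸ one_ne_zero))
  set r := √(a ^ 2 - (a / 2) ^ 2)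
  have hr : r ^ 2 = a ^ 2 - (a / 2) ^ 2 := Real.sq_sqrt (by nlinarith)
  have hra : r < a := (Real.sqrt_lt' ha).2 (by nlinarith)
  obtain ⟨L, hL⟩ := exists_lipschitzOnWith_sphereChart (u := u) hra
  have hsub : sphere (0 : E) a ∩ {x | a / 2 < ⟪u, x⟫} ⊆ sphereChart a u '' closedBall 0 r :=
    fun x ⟨hx, (hxu : a / 2 < ⟪u, x⟫)⟩ => mem_image_sphereChart hu
      (mem_sphere_zero_iff_norm.1 hx) (by linarith) (by nlinarith) (Real.sqrt_nonneg _)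
  calc μH[m] (sphere (0 : E) a ∩ {x | a / 2 < ⟪u, x⟫})
      ≤ μH[m] (sphereChart a u '' closedBall 0 r) := measure_mono hsub
    _ ≤ L ^ (m : ℝ) * μH[m] (closedBall (0 : (ℝ ∙ u)ᗮ) r) :=
      hL.hausdorffMeasure_image_le (Nat.cast_nonneg m)
    _ < ⊤ := ENNReal.mul_lt_top (by simp) (isCompact_closedBall 0 r).measure_lt_top

theorem hausdorffMeasure_sphere_lt_top (ha : 0 < a) : μH[m] (sphere (0 : E) a) < ⊤ := by
  obtain ⟨t, ht, hcover⟩ := (isCompact_sphere (0 : E) a).elim_nhds_subcover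
    (fun x => {z | a / 2 < ⟪a⁻¹ • x, z⟫}) fun x hx => by
      refine (isOpen_lt continuous_const (continuous_const.inner continuous_id)).mem_nhds ?_
      show a / 2 < ⟪a⁻¹ • x, x⟫
      rw [real_inner_smul_left, real_inner_self_eq_norm_sq,
        mem_sphere_zero_iff_norm.1 hx]
      field_simp
      linarith
  calc μH[m] (sphere (0 : E) a)
      ≤ μH[m] (⋃ x ∈ t, sphere (0 : E) a ∩ {z | a / 2 < ⟪a⁻¹ • x, z⟫}) := by
        rw [← inter_iUnion₂]
        exact measure_mono (subset_inter subset_rfl hcover)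
    _ ≤ ∑ x ∈ t, μH[m] (sphere (0 : E) a ∩ {z | a / 2 < ⟪a⁻¹ • x, z⟫}) :=
      measure_biUnion_finset_le t _
    _ < ⊤ := ENNReal.sum_lt_top.2 fun x hx => hausdorffMeasure_sphere_inter_halfspace_lt_top hE
      (norm_inv_smul_of_mem_sphere (ht x hx) ha.ne') ha

theorem hausdorffMeasure_sphere_inter_ball_pos (ha : 0 < a) {x₀ : E} (hx₀ : x₀ ∈ sphere 0 a)
    {δ : ℝ} (hδ : 0 < δ) : 0 < μH[m] (sphere (0 : E) a ∩ ball x₀ δ) := by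
  set u := a⁻¹ • x₀
  have hu : ‖u‖ = 1 := norm_inv_smul_of_mem_sphere hx₀ ha.ne'
  have := isAddHaarMeasure_hausdorffMeasure_orthogonal_span_singleton hE
    (norm_ne_zero_iff.1 (hu ▸ one_ne_zero))
  have hchart0 : sphereChart a u 0 = x₀ := by
    simp [sphereChart, u, Real.sqrt_sq ha.le, smul_smul, ha.ne']
  have hcont : Continuous (sphereChart a u) := by unfold sphereChart; fun_prop
  obtain ⟨ρ, hρ, hρδ⟩ := Metric.continuousAt_iff.1 hcont.continuousAt δ hδ
  have hball : ball (0 : (ℝ ∙ u)ᗮ) (min ρ a)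
      ⊆ (ℝ ∙ u)ᗮ.orthogonalProjectionOnto '' (sphere 0 a ∩ ball x₀ δ) := by
    intro y hy
    rw [mem_ball_zero_iff, lt_min_iff] at hy
    refine ⟨sphereChart a u y, ⟨?_, ?_⟩, orthogonalProjectionOnto_sphereChart y⟩
    · exact mem_sphere_zero_iff_norm.2 (norm_sphereChart hu hy.2.le)
    · rw [mem_ball, ← hchart0]
      exact hρδ (by simpa using hy.1)
  calc 0 < μH[m] (ball (0 : (ℝ ∙ u)ᗮ) (min ρ a)) := measure_ball_pos _ _ (lt_min hρ ha)
    _ ≤ μH[m] ((ℝ ∙ u)ᗮ.orthogonalProjectionOnto '' (sphere 0 a ∩ ball x₀ δ)) :=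
      measure_mono hball
    _ ≤ 1 ^ (m : ℝ) * μH[m] (sphere (0 : E) a ∩ ball x₀ δ) :=
      (Submodule.lipschitzWith_orthogonalProjectionOnto _).hausdorffMeasure_image_le
        (Nat.cast_nonneg m) _
    _ = μH[m] (sphere (0 : E) a ∩ ball x₀ δ) := by simp

theorem integrableOn_sphere (ha : 0 < a) {f : E → ℝ} (hf : Continuous f) :
    IntegrableOn f (sphere 0 a) μH[m] := by
  obtain ⟨C, hC⟩ := (isCompact_sphere (0 : E) a).exists_bound_of_continuousOn hf.continuousOn
  exact .of_bound (hausdorffMeasure_sphere_lt_top hE ha) hf.aestronglyMeasurable C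
    (ae_restrict_of_forall_mem isClosed_sphere.measurableSet hC)

theorem setIntegral_sphere_pos (ha : 0 < a) {f : E → ℝ} (hf : Continuous f)
    (hnn : ∀ x ∈ sphere 0 a, 0 ≤ f x) {x₀ : E} (hx₀ : x₀ ∈ sphere 0 a) (hpos : 0 < f x₀) :
    0 < ∫ x in sphere 0 a, f x ∂μH[m] := by
  rw [setIntegral_pos_iff_support_of_nonneg_ae
    (ae_restrict_of_forall_mem isClosed_sphere.measurableSet hnn) (integrableOn_sphere hE ha hf)]
  obtain ⟨δ, hδ, hball⟩ := Metric.isOpen_iff.1 hf.isOpen_support x₀ hpos.ne'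
  exact (hausdorffMeasure_sphere_inter_ball_pos hE ha hx₀ hδ).trans_le
    (measure_mono fun x hx => ⟨hball hx.2, hx.1⟩)

end SphereMeasure

namespace MvPolynomial

theorem continuous_eval_euclideanSpace {σ : Type*} (g : MvPolynomial σ ℝ) :
    Continuous fun x : EuclideanSpace ℝ σ => eval (fun i => x i) g :=
  (continuous_eval g).comp (PiLp.continuous_ofLp 2 _)

variable {σ : Type*} [Fintype σ] {m : ℕ} {a : ℝ}

theorem setIntegral_sphere_eval_pos (hσ : Fintype.card σ = m + 1) (ha : 0 < a)
    {g : MvPolynomial σ ℝ} (hg0 : g ≠ 0) (hg : ∀ α ∈ g.support, 2 ≤ α.degree)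
    (hconv : ConvexOn ℝ univ fun v => eval v g) :
    0 < ∫ x in sphere (0 : EuclideanSpace ℝ σ) a, eval (fun i => x i) g ∂μH[m] := by
  obtain ⟨x₀, hx₀, hgx₀⟩ :
      ∃ x₀ ∈ sphere (0 : EuclideanSpace ℝ σ) a, eval (fun i => x₀ i) g ≠ 0 := by
    by_contra! h
    refine hg0 (eq_zero_of_convexOn_of_forall_ray hg hconv fun v hv => ?_)
    have hv' : 0 < ‖WithLp.toLp 2 v‖ := norm_pos_iff.2 fun h => hv (by simpa using h)
    refine ⟨a / ‖WithLp.toLp 2 v‖, by positivity, h (WithLp.toLp 2 _) ?_⟩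
    rw [mem_sphere_zero_iff_norm, WithLp.toLp_smul, norm_smul, Real.norm_of_nonneg (by positivity),
      div_mul_cancel₀ _ hv'.ne']
  exact setIntegral_sphere_pos (by simp [hσ]) ha (continuous_eval_euclideanSpace g)
    (fun x _ => eval_nonneg_of_convexOn hg hconv _) hx₀
    ((eval_nonneg_of_convexOn hg hconv _).lt_of_ne' hgx₀)

theorem exists_sum_abs_coeff_le_mul_setIntegral_sphere (hσ : Fintype.card σ = m + 1)
    (s : Finset (σ →₀ ℕ)) (hs : ∀ α ∈ s, 2 ≤ α.degree) (ha : 0 < a) :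
    ∃ C > 0, ∀ g : MvPolynomial σ ℝ, g.support ⊆ s → ConvexOn ℝ univ (fun v => eval v g) →
      ∑ α ∈ g.support, |coeff α g|
        ≤ C * ∫ x in sphere (0 : EuclideanSpace ℝ σ) a, eval (fun i => x i) g ∂μH[m] := by
  have hint (g : MvPolynomial σ ℝ) := integrableOn_sphere (m := m) (by simp [hσ]) ha
    (continuous_eval_euclideanSpace g)
  let Λ : MvPolynomial σ ℝ →ₗ[ℝ] ℝ :=
    { toFun g := ∫ x in sphere (0 : EuclideanSpace ℝ σ) a, eval (fun i => x i) g ∂μH[m]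
      map_add' p q := by simpa using integral_add (hint p) (hint q)
      map_smul' r p := by simpa [smul_eval] using integral_const_mul r _ }
  exact exists_sum_abs_coeff_le_mul s Λ fun g hg0 hgs hconv =>
    setIntegral_sphere_eval_pos hσ ha hg0 (fun α hα => hs α (hgs hα)) hconv

end MvPolynomial

theorem stmt4_general (n M : ℕ) (hn : 1 ≤ n) (a : ℝ) (ha : 0 < a) :
    ∃ C : ℝ, 0 < C ∧
      ∀ g : MvPolynomial (Fin n) ℝ,
        (∀ α ∈ g.support, 2 ≤ ∑ i, α i ∧ ∑ i, α i ≤ M) →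
        ConvexOn ℝ Set.univ (fun v : Fin n → ℝ => MvPolynomial.eval v g) →
        ∑ α ∈ g.support, |MvPolynomial.coeff α g|
          ≤ C * ∫ σ in Metric.sphere (0 : EuclideanSpace ℝ (Fin n)) a,
                MvPolynomial.eval (fun i => σ i) g ∂(μH[(n : ℝ) - 1]) := by
  obtain ⟨m, rfl⟩ : ∃ m, n = m + 1 := ⟨n - 1, by omega⟩
  rw [show ((m + 1 : ℕ) : ℝ) - 1 = m by push_cast; ring]
  set Γ := (Finset.Icc 2 M).biUnion fun k => (Finset.univ : Finset (Fin (m + 1))).finsuppAntidiag k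
  have hΓ (α : Fin (m + 1) →₀ ℕ) : α ∈ Γ ↔ 2 ≤ ∑ i, α i ∧ ∑ i, α i ≤ M := by simp [Γ]
  obtain ⟨C, hC, hbound⟩ := MvPolynomial.exists_sum_abs_coeff_le_mul_setIntegral_sphere
    (Fintype.card_fin _) Γ (fun α hα => by simpa [Finsupp.degree_eq_sum] using ((hΓ α).1 hα).1) ha
  exact ⟨C, hC, fun g hg hconv => hbound g (fun α hα => (hΓ α).2 (hg α hα)) hconv⟩

/-- Coefficients of convex polynomials with no constant or linear terms are
controlled by the average of the polynomial over a sphere of radius `a`. -/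
theorem stmt4 (n M : ℕ) (hn : 1 ≤ n) (hM : 2 ≤ M) (a : ℝ) (ha : 0 < a) :
    ∃ C : ℝ, 0 < C ∧
      ∀ g : MvPolynomial (Fin n) ℝ,
        (∀ α ∈ g.support, 2 ≤ ∑ i, α i ∧ ∑ i, α i ≤ M) →
        ConvexOn ℝ Set.univ (fun v : Fin n → ℝ => MvPolynomial.eval v g) →
        ∑ α ∈ g.support, |MvPolynomial.coeff α g|
          ≤ C * ∫ σ in Metric.sphere (0 : EuclideanSpace ℝ (Fin n)) a,
                MvPolynomial.eval (fun i => σ i) g ∂(μH[(n : ℝ) - 1]) :=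
  stmt4_general n M hn a ha
end

section
/- Let g : ℝⁿ → ℝ be a convex polynomial of degree at most M with g(0) = 0 and ∇g(0) = 0, and suppose {|v| ≤ A} ⊆ {g ≤ 1} ⊆ {|v| ≤ B} for constants 0 < A ≤ B. Then there exists a constant C₁ > 0 depending only on A, B, M such that g(x) ≥ C₁ for every x with |x| = A. -/
open Polynomial


noncomputable def rayPoly {n : ℕ} (g : MvPolynomial (Fin n) ℝ) (x : Fin n → ℝ) : Polynomial ℝ :=
  MvPolynomial.aeval (fun i => Polynomial.C (x i) * Polynomial.X) g

lemma rayPoly_eval {n : ℕ} (g : MvPolynomial (Fin n) ℝ) (x : Fin n → ℝ) (s : ℝ) :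
    (rayPoly g x).eval s = MvPolynomial.eval (fun i => s * x i) g := by
  have h := MvPolynomial.eval₂_comp_left (Polynomial.evalRingHom s)
      (algebraMap ℝ (Polynomial ℝ)) (fun i => Polynomial.C (x i) * Polynomial.X) g
  simp only [rayPoly, MvPolynomial.aeval_def]
  rw [show (Polynomial.eval s (MvPolynomial.eval₂ (algebraMap ℝ (Polynomial ℝ))
      (fun i => Polynomial.C (x i) * Polynomial.X) g)) =
      Polynomial.evalRingHom s (MvPolynomial.eval₂ (algebraMap ℝ (Polynomial ℝ))
      (fun i => Polynomial.C (x i) * Polynomial.X) g) from rfl, h]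
  have h1 : (Polynomial.evalRingHom s).comp (algebraMap ℝ (Polynomial ℝ)) = RingHom.id ℝ := by
    ext r
    simp only [RingHom.comp_apply, RingHom.id_apply, Polynomial.algebraMap_eq,
      Polynomial.coe_evalRingHom, Polynomial.eval_C]
  have h2 : (⇑(Polynomial.evalRingHom s) ∘ fun i => Polynomial.C (x i) * Polynomial.X)
      = fun i => s * x i := by
    funext i
    show Polynomial.eval s (Polynomial.C (x i) * Polynomial.X) = s * x i
    rw [Polynomial.eval_mul, Polynomial.eval_C, Polynomial.eval_X, mul_comm]
  rw [h1, h2, MvPolynomial.eval₂_id]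

lemma rayPoly_rep {n : ℕ} (g : MvPolynomial (Fin n) ℝ) (x : Fin n → ℝ) :
    rayPoly g x = ∑ α ∈ g.support,
      Polynomial.C (g.coeff α * ∏ i, x i ^ α i) * Polynomial.X ^ (∑ i, α i) := by
  conv_lhs => rw [rayPoly, ← MvPolynomial.support_sum_monomial_coeff g]
  rw [map_sum]
  refine Finset.sum_congr rfl fun α _ => ?_
  rw [MvPolynomial.aeval_monomial]
  rw [Finsupp.prod_fintype _ _ (fun i => pow_zero _)]
  simp_rw [mul_pow]
  rw [Finset.prod_mul_distrib, Finset.prod_pow_eq_pow_sum]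
  simp only [← Polynomial.C_pow]
  rw [← map_prod, Polynomial.algebraMap_eq, ← mul_assoc, ← Polynomial.C_mul]

lemma rayPoly_natDegree_le {n M : ℕ} (g : MvPolynomial (Fin n) ℝ) (x : Fin n → ℝ)
    (hdeg : g.totalDegree ≤ M) : (rayPoly g x).natDegree ≤ M := by
  rw [rayPoly_rep]
  refine Polynomial.natDegree_sum_le_of_forall_le _ _ fun α hα => ?_
  refine le_trans (Polynomial.natDegree_C_mul_le _ _) ?_
  refine le_trans (Polynomial.natDegree_X_pow_le _) ?_
  refine le_trans ?_ hdeg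
  have := MvPolynomial.le_totalDegree hα
  rwa [Finsupp.sum_fintype _ _ (fun i => rfl)] at this

lemma rayPoly_dvd {n : ℕ} (g : MvPolynomial (Fin n) ℝ) (x : Fin n → ℝ)
    (hsupp : ∀ α ∈ g.support, 2 ≤ ∑ i, α i) :
    (Polynomial.X : Polynomial ℝ) ^ 2 ∣ rayPoly g x := by
  rw [rayPoly_rep]
  refine Finset.dvd_sum fun α hα => ?_
  exact Dvd.dvd.mul_left (pow_dvd_pow _ (hsupp α hα)) _

lemma nonneg_of_convex (p : Polynomial ℝ)
    (hconv : ConvexOn ℝ Set.univ fun s : ℝ => p.eval s)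
    (hdvd : (Polynomial.X : Polynomial ℝ) ^ 2 ∣ p) (t : ℝ) : 0 ≤ p.eval t := by
  obtain ⟨q, rfl⟩ := hdvd
  by_contra hneg
  push_neg at hneg
  have hqt : t ^ 2 * q.eval t < 0 := by simpa [pow_two] using hneg
  have key : ∀ l : ℝ, 0 < l → l ≤ 1 → l * (t ^ 2 * q.eval (l * t)) ≤ t ^ 2 * q.eval t := by
    intro l hl0 hl1
    have h := hconv.2 (Set.mem_univ t) (Set.mem_univ (0:ℝ)) hl0.le
      (by linarith : (0:ℝ) ≤ 1 - l) (by ring)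
    simp only [smul_eq_mul, mul_zero, add_zero, Polynomial.eval_mul, Polynomial.eval_pow,
      Polynomial.eval_X] at h
    nlinarith [h]
  have hT : Filter.Tendsto (fun l : ℝ => l * (t ^ 2 * q.eval (l * t)))
      (nhdsWithin 0 (Set.Ioi 0)) (nhds 0) := by
    have hc : Continuous fun l : ℝ => l * (t ^ 2 * q.eval (l * t)) := by
      fun_prop
    have := hc.tendsto 0
    simpa using this.mono_left nhdsWithin_le_nhds
  have hev : ∀ᶠ l in nhdsWithin (0:ℝ) (Set.Ioi 0),
      t ^ 2 * q.eval t < l * (t ^ 2 * q.eval (l * t)) :=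
    hT.eventually (eventually_gt_nhds hqt)
  have hmem : Set.Ioo (0:ℝ) 1 ∈ nhdsWithin (0:ℝ) (Set.Ioi 0) :=
    Ioo_mem_nhdsGT_of_mem ⟨le_refl 0, one_pos⟩
  obtain ⟨l, hl1, hl2⟩ := (hev.and (Filter.eventually_of_mem hmem fun _ h => h)).exists
  exact absurd (key l hl2.1 hl2.2.le) (not_le.mpr hl1)

theorem stmt6 (n M : ℕ) (A B : ℝ) (hA : 0 < A) (hAB : A ≤ B) :
    ∃ C₁ : ℝ, 0 < C₁ ∧
      ∀ g : MvPolynomial (Fin n) ℝ,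
        g.totalDegree ≤ M →
        (∀ α ∈ g.support, 2 ≤ ∑ i, α i) →
        ConvexOn ℝ Set.univ (fun v : Fin n → ℝ => MvPolynomial.eval v g) →
        {v : EuclideanSpace ℝ (Fin n) | ‖v‖ ≤ A}
          ⊆ {v : EuclideanSpace ℝ (Fin n) | MvPolynomial.eval (fun i => v i) g ≤ 1} →
        {v : EuclideanSpace ℝ (Fin n) | MvPolynomial.eval (fun i => v i) g ≤ 1}
          ⊆ {v : EuclideanSpace ℝ (Fin n) | ‖v‖ ≤ B} →
        ∀ x : EuclideanSpace ℝ (Fin n), ‖x‖ = A →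
          C₁ ≤ MvPolynomial.eval (fun i => x i) g := by
  classical
  set t₀ : ℝ := 2 * B / A with ht₀def
  set v : ℕ → ℝ := fun j => (j : ℝ) / (M + 1) with hvdef
  set S : Finset ℕ := Finset.range (M + 2) with hSdef
  set K : ℝ := ∑ j ∈ S, |((Lagrange.basis S v j).eval t₀)| with hKdef
  have hK1 : (0:ℝ) < max K 1 := lt_of_lt_of_le one_pos (le_max_right _ _)
  refine ⟨(max K 1)⁻¹, inv_pos.mpr hK1, ?_⟩
  intro g hdeg hsupp hconv hsub1 hsub2 x hx
  have hB : 0 < B := lt_of_lt_of_le hA hAB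
  have ht₀1 : 1 < t₀ := by
    rw [ht₀def, lt_div_iff₀ hA]; linarith
  set xf : Fin n → ℝ := fun i => x i with hxfdef
  set p : Polynomial ℝ := rayPoly g xf with hpdef
  -- convexity of the restriction to the ray
  have hpconv : ConvexOn ℝ Set.univ fun s : ℝ => p.eval s := by
    have hcomp := hconv.comp_affineMap
      ((LinearMap.id.smulRight xf : ℝ →ₗ[ℝ] (Fin n → ℝ)).toAffineMap)
    have heq : ((fun w : Fin n → ℝ => MvPolynomial.eval w g) ∘
        (LinearMap.id.smulRight xf : ℝ →ₗ[ℝ] (Fin n → ℝ)).toAffineMap)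
        = fun s : ℝ => p.eval s := by
      funext s
      simp only [Function.comp_apply, LinearMap.coe_toAffineMap, LinearMap.smulRight_apply,
        LinearMap.id_apply, rayPoly_eval, hpdef]
      rfl
    rwa [heq, Set.preimage_univ] at hcomp
  have hdvd := rayPoly_dvd g xf hsupp
  have hnn : ∀ t : ℝ, 0 ≤ p.eval t := nonneg_of_convex p hpconv hdvd
  -- evaluation facts
  have hsmul_eval : ∀ s : ℝ, MvPolynomial.eval (fun i => (s • x : EuclideanSpace ℝ (Fin n)) i) g
      = p.eval s := by
    intro s
    rw [hpdef, rayPoly_eval]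
    rfl
  have hε : p.eval 1 = MvPolynomial.eval (fun i => x i) g := by
    rw [hpdef, rayPoly_eval,
      show (fun i => (1:ℝ) * xf i) = fun i => x i from funext fun i => one_mul _]
  -- p.eval t₀ > 1
  have hgt : 1 < p.eval t₀ := by
    by_contra hle
    push_neg at hle
    have hmem : (t₀ • x : EuclideanSpace ℝ (Fin n)) ∈
        {v : EuclideanSpace ℝ (Fin n) | MvPolynomial.eval (fun i => v i) g ≤ 1} := by
      rw [Set.mem_setOf_eq, hsmul_eval t₀]
      exact hle
    have := hsub2 hmem
    simp only [Set.mem_setOf_eq, norm_smul, hx, Real.norm_eq_abs] at this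
    rw [abs_of_pos (by positivity : (0:ℝ) < t₀), ht₀def, div_mul_cancel₀ _ (ne_of_gt hA)] at this
    linarith
  -- values at nodes are in [0, ε]
  have hε0 : 0 ≤ p.eval 1 := hnn 1
  have hnode_le : ∀ j ∈ S, p.eval (v j) ≤ p.eval 1 := by
    intro j hj
    have hj01 : 0 ≤ v j ∧ v j ≤ 1 := by
      constructor
      · positivity
      · rw [hvdef, div_le_one (by positivity)]
        rw [hSdef, Finset.mem_range] at hj
        have : (j : ℝ) ≤ (M + 1 : ℕ) := Nat.cast_le.mpr (by omega)
        push_cast at this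
        linarith
    have h := hpconv.2 (Set.mem_univ (1:ℝ)) (Set.mem_univ (0:ℝ)) hj01.1
      (by linarith [hj01.2] : (0:ℝ) ≤ 1 - v j) (by ring)
    have h0 : p.eval 0 = 0 := by
      obtain ⟨q, hq⟩ := hdvd
      rw [hpdef, hq]
      simp
    rw [smul_eq_mul, smul_eq_mul, smul_eq_mul, smul_eq_mul, mul_one, mul_zero, add_zero] at h
    have h' : p.eval (v j) ≤ v j * p.eval 1 + (1 - v j) * p.eval 0 := h
    rw [h0, mul_zero, add_zero] at h'
    calc p.eval (v j) ≤ v j * p.eval 1 := h'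
      _ ≤ 1 * p.eval 1 := by
        apply mul_le_mul_of_nonneg_right hj01.2 hε0
      _ = p.eval 1 := one_mul _
  -- Lagrange interpolation
  have hinj : Set.InjOn v ↑S := by
    intro a _ b _ hab
    rw [hvdef] at hab
    have hM1 : ((M:ℝ) + 1) ≠ 0 := by positivity
    field_simp at hab
    exact_mod_cast hab
  have hdeglt : p.degree < (S.card : ℕ) := by
    rw [hSdef, Finset.card_range]
    refine lt_of_le_of_lt Polynomial.degree_le_natDegree ?_
    exact_mod_cast Nat.lt_of_le_of_lt (rayPoly_natDegree_le g xf hdeg) (by omega)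
  have hrep := Lagrange.eq_interpolate hinj hdeglt
  have hval : p.eval t₀ = ∑ j ∈ S, p.eval (v j) * (Lagrange.basis S v j).eval t₀ := by
    conv_lhs => rw [hrep]
    rw [Lagrange.interpolate_apply, Polynomial.eval_finset_sum]
    refine Finset.sum_congr rfl fun j _ => ?_
    rw [Polynomial.eval_mul, Polynomial.eval_C]
  -- bound
  have hbound : p.eval t₀ ≤ p.eval 1 * K := by
    rw [hval, hKdef, Finset.mul_sum]
    refine Finset.sum_le_sum fun j hj => ?_
    calc p.eval (v j) * (Lagrange.basis S v j).eval t₀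
        ≤ p.eval (v j) * |(Lagrange.basis S v j).eval t₀| :=
          mul_le_mul_of_nonneg_left (le_abs_self _) (hnn _)
      _ ≤ p.eval 1 * |(Lagrange.basis S v j).eval t₀| :=
          mul_le_mul_of_nonneg_right (hnode_le j hj) (abs_nonneg _)
  have hKK : p.eval 1 * K ≤ p.eval 1 * max K 1 :=
    mul_le_mul_of_nonneg_left (le_max_left _ _) hε0
  have h1 : 1 < p.eval 1 * max K 1 := by linarith
  rw [← hε]
  rw [inv_le_iff_one_le_mul₀ hK1]
  nlinarith [h1]
end

section
/- (Bruna–Nagel–Wainger, Lemma 2.1) Let p(t) = Σ_{j=2}^M a_j t^j be a convex polynomial on [0, ∞) of one real variable with p(0) = p'(0) = 0. Then there exists a constant C_M > 0 depending only on M such that for all t ≥ 0, C_M Σ_{j=2}^M |a_j| t^j ≤ p(t) ≤ Σ_{j=2}^M |a_j| t^j. -/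
/-! A convex `p` with `p 0 = p' 0 = 0` is nondecreasing on `[0, ∞)`, so `0 ≤ p u ≤ p t` for
`u ∈ [0, t]`. The scaled coefficients `a j * t ^ j` are the image of the values `p (i * t / N)`,
`i < N`, under the inverse of a Vandermonde matrix that does not depend on `t` or `a`, so they are
bounded by a constant depending only on `M` times `p t`. -/
open Finset Function Matrix

theorem Matrix.exists_norm_le_mul_norm_vandermonde_mulVec {𝕜 : Type*} [NontriviallyNormedField 𝕜]
    [CompleteSpace 𝕜] {n : ℕ} {c : Fin n → 𝕜} (hc : Injective c) :
    ∃ K : ℝ, 0 ≤ K ∧ ∀ x : Fin n → 𝕜, ‖x‖ ≤ K * ‖vandermonde c *ᵥ x‖ := by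
  obtain ⟨K, -, hK⟩ := (mulVecLin (vandermonde c)).injective_iff_antilipschitz.mp
    (mulVec_injective_of_det_ne_zero (det_vandermonde_ne_zero_iff.mpr hc))
  exact ⟨K, K.2, ZeroHomClass.bound_of_antilipschitz _ hK⟩

theorem exists_sum_abs_mul_pow_le_of_abs_sum_mul_pow_le (s : Finset ℕ) :
    ∃ K : ℝ, ∀ (a : ℕ → ℝ) (t B : ℝ), (∀ u ∈ Set.uIcc 0 t, |∑ j ∈ s, a j * u ^ j| ≤ B) →
      ∑ j ∈ s, |a j * t ^ j| ≤ K * B := by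
  set N := s.sup id + 1
  have hsN : s ⊆ range N := subset_range_sup_succ s
  let c : Fin N → ℝ := fun i => i / N
  have hc : Injective c := fun i j h =>
    Fin.ext (by exact_mod_cast (div_left_inj' (by positivity : (N : ℝ) ≠ 0)).mp h)
  obtain ⟨K, hK0, hK⟩ := exists_norm_le_mul_norm_vandermonde_mulVec hc
  refine ⟨s.card * K, fun a t B hB => ?_⟩
  have hB0 : 0 ≤ B := (abs_nonneg _).trans (hB 0 Set.left_mem_uIcc)
  let x : Fin N → ℝ := fun j => if (j : ℕ) ∈ s then a j * t ^ (j : ℕ) else 0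
  have hVx (i : Fin N) : (vandermonde c *ᵥ x) i = ∑ j ∈ s, a j * (c i * t) ^ j := by
    simp only [mulVec, dotProduct, vandermonde_apply, x, mul_ite, mul_zero]
    rw [Fin.sum_univ_eq_sum_range (fun j => if j ∈ s then c i ^ j * (a j * t ^ j) else 0) N,
      sum_ite_mem, inter_eq_right.mpr hsN]
    exact sum_congr rfl fun j _ => by ring
  have hnode (i : Fin N) : c i * t ∈ Set.uIcc 0 t := by
    have hci : c i ∈ Set.uIcc 0 1 := by
      rw [Set.uIcc_of_le zero_le_one]
      exact ⟨by positivity, div_le_one_of_le₀ (by exact_mod_cast i.is_lt.le) (by positivity)⟩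
    simpa only [Set.image_mul_const_uIcc, zero_mul, one_mul] using
      Set.mem_image_of_mem (· * t) hci
  have hx : ‖x‖ ≤ K * B := by
    have hVxB : ‖vandermonde c *ᵥ x‖ ≤ B := (pi_norm_le_iff_of_nonneg hB0).mpr fun i => by
      rw [Real.norm_eq_abs, hVx]
      exact hB _ (hnode i)
    exact (hK x).trans (mul_le_mul_of_nonneg_left hVxB hK0)
  calc ∑ j ∈ s, |a j * t ^ j| ≤ ∑ _j ∈ s, K * B := by
        refine sum_le_sum fun j hj => ?_
        have hjx : x ⟨j, mem_range.mp (hsN hj)⟩ = a j * t ^ j := if_pos hj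
        exact hjx ▸ (norm_le_pi_norm x _).trans hx
    _ = s.card * K * B := by rw [sum_const, nsmul_eq_mul, mul_assoc]

theorem ConvexOn.monotoneOn_of_hasDerivWithinAt_nonneg {S : Set ℝ} {f : ℝ → ℝ} {x f' : ℝ}
    (hf : ConvexOn ℝ S f) (hx : x ∈ S) (hf' : HasDerivWithinAt f f' S x) (h0 : 0 ≤ f') :
    MonotoneOn f (S ∩ Set.Ici x) := by
  rintro y ⟨hyS, hxy⟩ z ⟨hzS, -⟩ hyz
  obtain rfl | hyz := hyz.eq_or_lt
  · rfl
  have hslope : 0 ≤ slope f y z := by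
    obtain rfl | hxy := (Set.mem_Ici.mp hxy).eq_or_lt
    · exact h0.trans (hf.le_slope_of_hasDerivWithinAt hx hzS hyz hf')
    · calc 0 ≤ f' := h0
        _ ≤ slope f x y := hf.le_slope_of_hasDerivWithinAt hx hyS hxy hf'
        _ ≤ slope f y z := by
          simpa only [slope_def_field] using hf.slope_mono_adjacent hx hzS hxy hyz
  rwa [slope_def_field, le_div_iff₀ (sub_pos.mpr hyz), zero_mul, sub_nonneg] at hslope

theorem hasDerivAt_sum_mul_pow_zero {s : Finset ℕ} (hs : ∀ j ∈ s, 2 ≤ j) (a : ℕ → ℝ) :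
    HasDerivAt (fun t => ∑ j ∈ s, a j * t ^ j) 0 0 := by
  refine (HasDerivAt.fun_sum (u := s) (A := fun j t => a j * t ^ j)
    fun j _ => (hasDerivAt_pow j (0 : ℝ)).const_mul (a j)).congr_deriv (sum_eq_zero fun j hj => ?_)
  simp [zero_pow (by have := hs j hj; omega : j - 1 ≠ 0)]

theorem stmt7_general (M : ℕ) :
    ∃ C : ℝ, 0 < C ∧
      ∀ a : ℕ → ℝ,
        ConvexOn ℝ (Set.Ici (0 : ℝ)) (fun t => ∑ j ∈ Finset.Icc 2 M, a j * t ^ j) →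
        ∀ t : ℝ, 0 ≤ t →
          C * ∑ j ∈ Finset.Icc 2 M, |a j| * t ^ j
              ≤ ∑ j ∈ Finset.Icc 2 M, a j * t ^ j ∧
          ∑ j ∈ Finset.Icc 2 M, a j * t ^ j
              ≤ ∑ j ∈ Finset.Icc 2 M, |a j| * t ^ j := by
  have hs : ∀ j ∈ Icc 2 M, 2 ≤ j := fun j hj => (mem_Icc.mp hj).1
  obtain ⟨K, hK⟩ := exists_sum_abs_mul_pow_le_of_abs_sum_mul_pow_le (Icc 2 M)
  refine ⟨(max K 1)⁻¹, by positivity, fun a hconv t ht => ⟨?_, ?_⟩⟩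
  · set p := fun t : ℝ => ∑ j ∈ Icc 2 M, a j * t ^ j
    have hp0 : p 0 = 0 :=
      sum_eq_zero fun j hj => by simp [zero_pow (by have := hs j hj; omega : j ≠ 0)]
    have hmono : MonotoneOn p (Set.Ici 0) := by
      simpa using hconv.monotoneOn_of_hasDerivWithinAt_nonneg Set.self_mem_Ici
        (hasDerivAt_sum_mul_pow_zero hs a).hasDerivWithinAt le_rfl
    have hnonneg {u : ℝ} (hu : 0 ≤ u) : 0 ≤ p u := hp0 ▸ hmono Set.self_mem_Ici hu hu
    have hvals : ∀ u ∈ Set.uIcc 0 t, |p u| ≤ p t := by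
      rw [Set.uIcc_of_le ht]
      exact fun u hu => (abs_of_nonneg (hnonneg hu.1)).trans_le (hmono hu.1 ht hu.2)
    rw [inv_mul_le_iff₀ (by positivity)]
    calc ∑ j ∈ Icc 2 M, |a j| * t ^ j = ∑ j ∈ Icc 2 M, |a j * t ^ j| :=
          sum_congr rfl fun j _ => by rw [abs_mul, abs_of_nonneg (pow_nonneg ht j)]
      _ ≤ K * p t := hK a t (p t) hvals
      _ ≤ max K 1 * p t := mul_le_mul_of_nonneg_right (le_max_left K 1) (hnonneg ht)
  · exact sum_le_sum fun j _ => mul_le_mul_of_nonneg_right (le_abs_self _) (pow_nonneg ht j)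

theorem stmt7 (M : ℕ) (hM : 2 ≤ M) :
    ∃ C : ℝ, 0 < C ∧
      ∀ a : ℕ → ℝ,
        ConvexOn ℝ (Set.Ici (0 : ℝ)) (fun t => ∑ j ∈ Finset.Icc 2 M, a j * t ^ j) →
        ∀ t : ℝ, 0 ≤ t →
          C * ∑ j ∈ Finset.Icc 2 M, |a j| * t ^ j
              ≤ ∑ j ∈ Finset.Icc 2 M, a j * t ^ j ∧
          ∑ j ∈ Finset.Icc 2 M, a j * t ^ j
              ≤ ∑ j ∈ Finset.Icc 2 M, |a j| * t ^ j :=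
  stmt7_general M
end

section
/- Let g : ℝⁿ → ℝ satisfy g(v) ≤ C(1 + |v₁|^{2m₁} + … + |v_n|^{2m_n}) for all v. Then its Legendre transform L(η) = sup_v {η·v − g(v)} satisfies L(η) ≥ C̃(|η₁|^{2m₁/(2m₁−1)} + … + |η_n|^{2m_n/(2m_n−1)}) − C, where C̃ > 0 depends only on C, m₁,…,m_n, and n. -/
/-!
The Legendre transform reverses inequalities and is additive over separated variables, so
`L(η) ≥ ∑ᵢ φᵢ*(ηᵢ) - C` with `φᵢ(t) = C |t|^{2mᵢ}`. The conjugate of `B |t|^k` is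
`(1 - 1/k) (k B)^{-1/(k-1)} |η|^{k/(k-1)}`, attained at `t = ± (|η| / (k B))^{1/(k-1)}`, and the
smallest of these finitely many positive constants serves as `C̃`.
-/

open Filter Topology

-- `(a / (k B)) ^ (1 / (k - 1))` is the critical point `a = k B t ^ (k - 1)` of `t ↦ a t - B t ^ k`.
lemma mul_sub_mul_rpow_at_critical_point {B k a : ℝ} (hB : 0 < B) (hk : 1 < k) (ha : 0 ≤ a) :
    a * (a / (k * B)) ^ (k - 1)⁻¹ - B * ((a / (k * B)) ^ (k - 1)⁻¹) ^ k =
      (1 - k⁻¹) * (k * B) ^ (-(k - 1)⁻¹) * a ^ (k / (k - 1)) := by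
  have hkB : 0 < k * B := by positivity
  have hp : k / (k - 1) = 1 + (k - 1)⁻¹ := by field_simp [show k - 1 ≠ 0 by linarith]; ring
  rw [← Real.rpow_mul (by positivity), Real.div_rpow ha hkB.le, Real.div_rpow ha hkB.le,
    inv_mul_eq_div, hp, Real.rpow_add' ha (by positivity), Real.rpow_one,
    Real.rpow_add hkB, Real.rpow_one, Real.rpow_neg hkB.le]
  field_simp

lemma exists_mul_sub_mul_abs_rpow_eq {B k : ℝ} (hB : 0 < B) (hk : 1 < k) (η : ℝ) :
    ∃ v : ℝ, η * v - B * |v| ^ k = (1 - k⁻¹) * (k * B) ^ (-(k - 1)⁻¹) * |η| ^ (k / (k - 1)) := by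
  have key := mul_sub_mul_rpow_at_critical_point hB hk (abs_nonneg η)
  set t := (|η| / (k * B)) ^ (k - 1)⁻¹
  have ht : 0 ≤ t := by positivity
  rcases le_total 0 η with hη | hη
  · refine ⟨t, ?_⟩
    rw [abs_of_nonneg ht]
    nth_rw 1 [← abs_of_nonneg hη]
    exact key
  · refine ⟨-t, ?_⟩
    rwa [abs_neg, abs_of_nonneg ht, mul_neg, ← neg_mul, ← abs_of_nonpos hη]

lemma exists_pos_forall_le {ι : Type*} [Finite ι] {f : ι → ℝ} (hf : ∀ i, 0 < f i) :
    ∃ c, 0 < c ∧ ∀ i, c ≤ f i :=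
  ((eventually_all.2 fun i => (eventually_le_nhds (hf i)).filter_mono nhdsWithin_le_nhds).and
    (self_mem_nhdsWithin : ∀ᶠ c in 𝓝[>] (0 : ℝ), 0 < c)).exists.imp fun _ h => ⟨h.2, h.1⟩

theorem stmt11 (n : ℕ) (m : Fin n → ℕ) (hm : ∀ i, 1 ≤ m i) (C : ℝ) (hC : 0 < C) :
    ∃ Ct : ℝ, 0 < Ct ∧
      ∀ g : (Fin n → ℝ) → ℝ,
        (∀ v, g v ≤ C * (1 + ∑ i, |v i| ^ (2 * m i))) →
        ∀ η : Fin n → ℝ, ∃ v : Fin n → ℝ,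
          Ct * (∑ i, |η i| ^ ((2 * m i : ℝ) / (2 * m i - 1))) - C
            ≤ (∑ i, η i * v i) - g v := by
  have hk : ∀ i, 1 < (2 * m i : ℝ) := fun i => by
    have : (1 : ℝ) ≤ m i := by exact_mod_cast hm i
    linarith
  obtain ⟨Ct, hCt, hCt_le⟩ : ∃ Ct, 0 < Ct ∧
      ∀ i, Ct ≤ (1 - (2 * m i : ℝ)⁻¹) * (2 * m i * C) ^ (-(2 * m i - 1 : ℝ)⁻¹) :=
    exists_pos_forall_le fun i =>
      mul_pos (sub_pos.2 (inv_lt_one_of_one_lt₀ (hk i))) (by have := hk i; positivity)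
  refine ⟨Ct, hCt, fun g hg η => ?_⟩
  choose v hv using fun i => exists_mul_sub_mul_abs_rpow_eq hC (hk i) (η i)
  have hv_le : ∀ i, Ct * |η i| ^ ((2 * m i : ℝ) / (2 * m i - 1)) ≤
      η i * v i - C * |v i| ^ (2 * m i) := fun i => by
    rw [← Real.rpow_natCast]; push_cast; rw [hv i]
    exact mul_le_mul_of_nonneg_right (hCt_le i) (by positivity)
  refine ⟨v, ?_⟩
  calc Ct * (∑ i, |η i| ^ ((2 * m i : ℝ) / (2 * m i - 1))) - C
      ≤ (∑ i, (η i * v i - C * |v i| ^ (2 * m i))) - C := by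
        rw [Finset.mul_sum]; gcongr with i; exact hv_le i
    _ = (∑ i, η i * v i) - C * (1 + ∑ i, |v i| ^ (2 * m i)) := by
        rw [Finset.sum_sub_distrib, ← Finset.mul_sum]; ring
    _ ≤ (∑ i, η i * v i) - g v := by linarith [hg v]
end

section
/- Suppose f : ℝⁿ → ℝ satisfies 0 ≤ f(w) ≤ C|w|²(a + r(w)) for all w, where a ≥ 1, C > 0 and r(w) = Σᵢ wᵢ^{2mᵢ}. Then the volume of the sublevel set {w : f(w) ≤ 1} is at least c · a^{−n/2}, where c > 0 depends only on C, n, and m₁,…,m_n. -/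
/-! The cube of half-side `√(ε / a)` with `ε = 1 / (C n (n + 1) + 1)` lies in `{f ≤ 1}`: on it
`|w|² ≤ n ε / a`, and since every `wᵢ² ≤ 1` also `r(w) ≤ n ε / a ≤ n a`, so that
`f(w) ≤ C n (n + 1) ε < 1`. The volume of this cube is `(2 √ε)ⁿ a^(-n/2)`. -/

open MeasureTheory Set

lemma volume_pi_Icc_neg_self {ι : Type*} [Fintype ι] {b : ℝ} (hb : 0 ≤ b) :
    volume (univ.pi fun _ : ι => Icc (-b) b) = ENNReal.ofReal ((2 * b) ^ Fintype.card ι) := by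
  rw [volume_pi_pi, Finset.prod_congr rfl fun _ _ => Real.volume_Icc, Finset.prod_const,
    Finset.card_univ, ← ENNReal.ofReal_pow (by linarith), sub_neg_eq_add, ← two_mul]

lemma Real.two_mul_sqrt_div_pow (ε : ℝ) {a : ℝ} (ha : 0 ≤ a) (n : ℕ) :
    (2 * √(ε / a)) ^ n = (2 * √ε) ^ n * a ^ (-(n : ℝ) / 2) := by
  rw [Real.sqrt_div' _ ha, mul_div_assoc', div_pow, div_eq_mul_inv]
  congr 1
  rw [Real.sqrt_eq_rpow, ← Real.rpow_natCast, ← Real.rpow_mul ha, ← Real.rpow_neg ha]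
  ring_nf

lemma pow_two_mul_le_of_sq_le {x t : ℝ} {k : ℕ} (hx : x ^ 2 ≤ t) (ht : t ≤ 1) (hk : 1 ≤ k) :
    x ^ (2 * k) ≤ t :=
  calc x ^ (2 * k) = (x ^ 2) ^ k := pow_mul x 2 k
    _ ≤ t ^ k := pow_le_pow_left₀ (sq_nonneg x) hx k
    _ ≤ t := pow_le_of_le_one ((sq_nonneg x).trans hx) ht (by omega)

lemma mul_sum_sq_mul_add_sum_pow_le {ι : Type*} [Fintype ι] {m : ι → ℕ} (hm : ∀ i, 1 ≤ m i)
    {C a ε : ℝ} (hC : 0 ≤ C) (ha : 1 ≤ a) (hε : ε ≤ 1) {w : ι → ℝ} (hw : ∀ i, w i ^ 2 ≤ ε / a) :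
    C * (∑ i, w i ^ 2) * (a + ∑ i, w i ^ (2 * m i)) ≤
      C * Fintype.card ι * (Fintype.card ι + 1) * ε := by
  have ha0 : 0 < a := by linarith
  have hεa : ε / a ≤ 1 := (div_le_one ha0).2 (hε.trans ha)
  have hsq : ∑ i, w i ^ 2 ≤ Fintype.card ι * (ε / a) := by
    simpa using Finset.sum_le_sum fun i (_ : i ∈ Finset.univ) => hw i
  have hpow : ∑ i, w i ^ (2 * m i) ≤ Fintype.card ι * a := by
    calc ∑ i, w i ^ (2 * m i) ≤ Fintype.card ι * (ε / a) := by
          simpa using Finset.sum_le_sum fun i (_ : i ∈ Finset.univ) =>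
            pow_two_mul_le_of_sq_le (hw i) hεa (hm i)
      _ ≤ Fintype.card ι * a := by gcongr; linarith
  have hpow0 : 0 ≤ ∑ i, w i ^ (2 * m i) :=
    Finset.sum_nonneg fun i _ => (even_two_mul (m i)).pow_nonneg (w i)
  calc C * (∑ i, w i ^ 2) * (a + ∑ i, w i ^ (2 * m i))
      ≤ C * (Fintype.card ι * (ε / a)) * (a + Fintype.card ι * a) := by
        gcongr
        exact mul_nonneg hC ((Finset.sum_nonneg fun i _ => sq_nonneg (w i)).trans hsq)
    _ = C * Fintype.card ι * (Fintype.card ι + 1) * ε := by field_simp; ring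

theorem stmt16 (n : ℕ) (m : Fin n → ℕ) (hm : ∀ i, 1 ≤ m i) (C : ℝ) (hC : 0 < C) :
    ∃ c : ℝ, 0 < c ∧
      ∀ (f : (Fin n → ℝ) → ℝ) (a : ℝ), 1 ≤ a →
        (∀ w, 0 ≤ f w) →
        (∀ w, f w ≤ C * (∑ i, w i ^ 2) * (a + ∑ i, w i ^ (2 * m i))) →
        ENNReal.ofReal (c * a ^ (-(n : ℝ) / 2))
          ≤ volume {w : Fin n → ℝ | f w ≤ 1} := by
  set K : ℝ := C * n * (n + 1) + 1
  have hK : 0 < K := by positivity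
  refine ⟨(2 * √K⁻¹) ^ n, by positivity, fun f a ha _ hf => ?_⟩
  have hcube : univ.pi (fun _ : Fin n => Icc (-√(K⁻¹ / a)) √(K⁻¹ / a)) ⊆ {w | f w ≤ 1} := by
    intro w hw
    have hw2 (i : Fin n) : w i ^ 2 ≤ K⁻¹ / a := by
      have := sq_le_sq' (hw i trivial).1 (hw i trivial).2
      rwa [Real.sq_sqrt (by positivity)] at this
    calc f w ≤ _ := hf w
      _ ≤ C * n * (n + 1) * K⁻¹ := by
        simpa using mul_sum_sq_mul_add_sum_pow_le hm hC.le ha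
          (inv_le_one_of_one_le₀ (le_add_of_nonneg_left (by positivity))) hw2
      _ ≤ 1 := by rw [← div_eq_mul_inv, div_le_one hK]; linarith
  calc ENNReal.ofReal ((2 * √K⁻¹) ^ n * a ^ (-(n : ℝ) / 2))
      = volume (univ.pi fun _ : Fin n => Icc (-√(K⁻¹ / a)) √(K⁻¹ / a)) := by
        rw [volume_pi_Icc_neg_self (Real.sqrt_nonneg _), Fintype.card_fin,
          Real.two_mul_sqrt_div_pow _ (by linarith)]
    _ ≤ _ := measure_mono hcube
end

section
/- Let h : ℝⁿ → ℝ be a nonnegative polynomial with h(0) = 0 that is of combined degree type: every multi-index α in its support satisfies Σᵢ αᵢ/(2mᵢ) ≤ 1, with equality only if some αⱼ = 2mⱼ; its pure terms of highest order are c_j v_j^{2m_j}; and h(0,…,0,t,0,…,0) takes positive values for large t in each coordinate. Let L be any line through the origin intersecting the boundary of R = {v : h(v) ≤ 1} at distances d₁ ≤ d₂ from the origin (in the two opposite directions). Then d₂/d₁ ≤ M, where M depends only on the degree of h (not on its coefficients). -/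
/-!
Restrict `h` to the line through `w = -d₂ u`: `g(t) = h(t w)` is a one-variable polynomial of
degree `≤ N` with `g(0) = 0`, `0 ≤ g ≤ 1` on `[0, 1]` by convexity, and `g(-d₁/d₂) = 1`.
Interpolating at `N + 1` fixed nodes of `[0, 1]` bounds the coefficients of such a `g` by a
constant depending only on `N`, so `|g(x)| ≤ C |x|` on `[-1, 1]`; at `x = -d₁/d₂` this gives
`d₂ ≤ C d₁`.
-/

open Finset

namespace Polynomial

theorem exists_sum_abs_coeff_le (N : ℕ) :
    ∃ C : ℝ, ∀ p : ℝ[X], p.natDegree ≤ N → (∀ x ∈ Set.Icc (0 : ℝ) 1, |p.eval x| ≤ 1) →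
      ∑ k ∈ range (N + 1), |p.coeff k| ≤ C := by
  set s := range (N + 1)
  set v : ℕ → ℝ := fun j => j / (N + 1)
  have hv : Set.InjOn v s := fun a _ b _ hab => by
    simpa [v, div_left_inj' (by positivity : (N : ℝ) + 1 ≠ 0)] using hab
  have hv_mem : ∀ j ∈ s, v j ∈ Set.Icc (0 : ℝ) 1 := fun j hj =>
    ⟨by positivity, div_le_one_of_le₀ (by exact_mod_cast (mem_range.mp hj).le) (by positivity)⟩
  refine ⟨∑ k ∈ s, ∑ j ∈ s, |(Lagrange.basis s v j).coeff k|, fun p hp hbd => ?_⟩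
  have hdeg : p.degree < #s := by
    rw [card_range]
    exact degree_le_natDegree.trans_lt (by exact_mod_cast Nat.lt_succ_of_le hp)
  have hcoeff : ∀ k, p.coeff k = ∑ j ∈ s, p.eval (v j) * (Lagrange.basis s v j).coeff k := by
    intro k
    conv_lhs => rw [Lagrange.eq_interpolate hv hdeg]
    simp only [Lagrange.interpolate_apply, finsetSum_coeff, coeff_C_mul]
  refine sum_le_sum fun k _ => ?_
  rw [hcoeff]
  refine (abs_sum_le_sum_abs _ _).trans (sum_le_sum fun j hj => ?_)
  rw [abs_mul]
  exact mul_le_of_le_one_left (abs_nonneg _) (hbd _ (hv_mem j hj))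

theorem abs_eval_le_abs_mul_sum_abs_coeff {R : Type*} [CommRing R] [LinearOrder R]
    [IsStrictOrderedRing R] {p : R[X]} {n : ℕ} (hp : p.natDegree < n) (hp0 : p.coeff 0 = 0) {x : R} (hx : |x| ≤ 1) :
    |p.eval x| ≤ |x| * ∑ k ∈ range n, |p.coeff k| := by
  rw [eval_eq_sum_range' hp, mul_sum]
  refine (abs_sum_le_sum_abs _ _).trans (sum_le_sum fun k _ => ?_)
  rcases k with _ | k
  · simp [hp0]
  · rw [abs_mul, abs_pow, mul_comm]
    exact mul_le_mul_of_nonneg_right (pow_le_of_le_one (abs_nonneg x) hx k.succ_ne_zero)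
      (abs_nonneg _)

theorem exists_abs_eval_le_mul_abs (N : ℕ) :
    ∃ C : ℝ, 0 < C ∧ ∀ p : ℝ[X], p.natDegree ≤ N → p.eval 0 = 0 →
      (∀ x ∈ Set.Icc (0 : ℝ) 1, |p.eval x| ≤ 1) → ∀ x : ℝ, |x| ≤ 1 → |p.eval x| ≤ C * |x| := by
  obtain ⟨C, hC⟩ := exists_sum_abs_coeff_le N
  refine ⟨max C 1, by positivity, fun p hp hp0 hbd x hx => ?_⟩
  rw [← coeff_zero_eq_eval_zero] at hp0
  calc |p.eval x| ≤ |x| * ∑ k ∈ range (N + 1), |p.coeff k| :=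
        abs_eval_le_abs_mul_sum_abs_coeff (Nat.lt_succ_of_le hp) hp0 hx
    _ ≤ |x| * max C 1 := by gcongr; exact (hC p hp hbd).trans (le_max_left _ _)
    _ = max C 1 * |x| := mul_comm _ _

end Polynomial

theorem ConvexOn.apply_smul_le_smul_apply {𝕜 E β : Type*} [Field 𝕜] [LinearOrder 𝕜]
    [IsStrictOrderedRing 𝕜] [AddCommGroup E] [Module 𝕜 E] [AddCommMonoid β] [PartialOrder β]
    [IsOrderedAddMonoid β] [Module 𝕜 β] [PosSMulMono 𝕜 β] {s : Set E} {f : E → β}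
    (hf : ConvexOn 𝕜 s f) (h0s : (0 : E) ∈ s) (hf0 : f 0 ≤ 0) {w : E} (hw : w ∈ s) {t : 𝕜}
    (ht0 : 0 ≤ t) (ht1 : t ≤ 1) : f (t • w) ≤ t • f w := by
  have := hf.2 hw h0s ht0 (sub_nonneg.mpr ht1) (add_sub_cancel t 1)
  rw [smul_zero, add_zero] at this
  exact this.trans
    (add_le_of_nonpos_right (smul_nonpos_of_nonneg_of_nonpos (sub_nonneg.mpr ht1) hf0))

namespace MvPolynomial

variable {σ R : Type*} [CommSemiring R]

noncomputable def lineRestriction (w : σ → R) (p : MvPolynomial σ R) : Polynomial R :=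
  aeval (fun i => Polynomial.C (w i) * Polynomial.X) p

theorem eval_lineRestriction (w : σ → R) (p : MvPolynomial σ R) (t : R) :
    (lineRestriction w p).eval t = eval (t • w) p := by
  rw [lineRestriction, ← Polynomial.coe_aeval_eq_eval, comp_aeval_apply]
  change eval _ p = _
  congr 2
  funext i
  simp only [map_mul, Polynomial.aeval_C, Polynomial.aeval_X, Pi.smul_apply, smul_eq_mul,
    Algebra.algebraMap_self, RingHom.id_apply]
  exact mul_comm _ _

theorem natDegree_lineRestriction_le (w : σ → R) (p : MvPolynomial σ R) :
    (lineRestriction w p).natDegree ≤ p.totalDegree := by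
  conv_lhs => rw [lineRestriction, p.as_sum, map_sum]
  refine Polynomial.natDegree_sum_le_of_forall_le _ _ fun α hα => ?_
  rw [aeval_monomial, ← Polynomial.C_eq_algebraMap]
  refine (Polynomial.natDegree_C_mul_le _ _).trans ?_
  refine (Polynomial.natDegree_prod_le _ _).trans ?_
  refine le_trans ?_ (le_totalDegree hα)
  refine sum_le_sum fun i _ => Polynomial.natDegree_pow_le.trans ?_
  have hlinear : (Polynomial.C (w i) * Polynomial.X).natDegree ≤ 1 :=
    (Polynomial.natDegree_C_mul_le _ _).trans Polynomial.natDegree_X_le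
  exact (Nat.mul_le_mul_left _ hlinear).trans_eq (mul_one _)

end MvPolynomial

theorem stmt17 (N : ℕ) :
    ∃ M : ℝ, 0 < M ∧
      ∀ (n : ℕ) (m : Fin n → ℕ), (∀ i, 1 ≤ m i) →
      ∀ h : MvPolynomial (Fin n) ℝ,
        h.totalDegree ≤ N →
        ConvexOn ℝ Set.univ (fun v : Fin n → ℝ => MvPolynomial.eval v h) →
        (∀ v, 0 ≤ MvPolynomial.eval v h) →
        MvPolynomial.eval (0 : Fin n → ℝ) h = 0 →
        (∀ α ∈ h.support, 2 ≤ ∑ i, α i) →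
        (∀ α ∈ h.support, ∑ i, (α i : ℝ) / (2 * m i) ≤ 1 ∧
          (∑ i, (α i : ℝ) / (2 * m i) = 1 → ∃ j, α j = 2 * m j)) →
        (∀ j, 0 < MvPolynomial.coeff (Finsupp.single j (2 * m j)) h) →
        ∀ (u : Fin n → ℝ) (d₁ d₂ : ℝ), 0 < d₁ → d₁ ≤ d₂ →
          MvPolynomial.eval (d₁ • u) h = 1 →
          MvPolynomial.eval ((-d₂) • u) h = 1 →
          d₂ ≤ M * d₁ := by
  obtain ⟨C, hC, hbound⟩ := Polynomial.exists_abs_eval_le_mul_abs N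
  refine ⟨C, hC, fun n m _ h hdeg hconv hnn h0 _ _ _ u d₁ d₂ hd₁ hd₁₂ he₁ he₂ => ?_⟩
  have hd₂ : 0 < d₂ := hd₁.trans_le hd₁₂
  set w := (-d₂) • u
  have hg := MvPolynomial.eval_lineRestriction w h
  have hg_le_one : ∀ x ∈ Set.Icc (0 : ℝ) 1, |(h.lineRestriction w).eval x| ≤ 1 := by
    rintro x ⟨hx0, hx1⟩
    rw [hg, abs_of_nonneg (hnn _)]
    calc MvPolynomial.eval (x • w) h ≤ x • MvPolynomial.eval w h :=
          hconv.apply_smul_le_smul_apply trivial h0.le trivial hx0 hx1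
      _ = x := by rw [he₂, smul_eq_mul, mul_one]
      _ ≤ 1 := hx1
  have hratio := hbound _ ((MvPolynomial.natDegree_lineRestriction_le w h).trans hdeg)
    (by rw [hg, zero_smul, h0]) hg_le_one (-(d₁ / d₂)) (by
      rw [abs_neg, abs_of_pos (div_pos hd₁ hd₂)]; exact div_le_one_of_le₀ hd₁₂ hd₂.le)
  rwa [hg, smul_smul, show -(d₁ / d₂) * -d₂ = d₁ by field_simp, he₁, abs_one, abs_neg,
    abs_of_pos (div_pos hd₁ hd₂), mul_div_assoc', le_div_iff₀ hd₂, one_mul] at hratio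
end
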